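/- arXiv:2007.07666 — 4 statements merged into one kernel-verified Lean document; each statement's English description precedes it below -/
import Mathlib

section
/- Let g be a homogeneous nondegenerate graded-symmetric metric with components g_{IJ} and inverse g^{IJ} (so g^{IK} g_{KJ} = δ^I_J). Then the inverse metric satisfies the symmetry g^{JK} = (-1)^{⟨deg J, deg J⟩ + ⟨deg K, deg K⟩ + ⟨deg K, deg J⟩ + ⟨deg g, deg g⟩} g^{KJ}. In particular, if deg(g) is even (⟨deg g, deg g⟩ = 0) the inverse metric is graded-symmetric as a rank-2 contravariant tensor, and if deg(g) is odd (⟨deg g, deg g⟩ = 1) the inverse metric is graded-skew-symmetric. -/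
/-- Degrees in `ℤ₂ⁿ`. -/
abbrev Deg (n : ℕ) := Fin n → ZMod 2

/-- The standard scalar product on `ℤ₂ⁿ`. -/
def ip {n : ℕ} (a b : Deg n) : ZMod 2 := ∑ i, a i * b i

/-- The sign factor `(-1)^x`. -/
def sgn {R : Type} [Ring R] (x : ZMod 2) : R := (-1) ^ x.val

lemma zmod2_cases (a : ZMod 2) : a = 0 ∨ a = 1 := by revert a; decide

lemma sgn_add {R : Type} [Ring R] (a b : ZMod 2) :
    (sgn (a + b) : R) = sgn a * sgn b := by
  rcases zmod2_cases a with ha | ha <;> rcases zmod2_cases b with hb | hb <;>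
    subst ha <;> subst hb <;>
    simp [sgn, show ((1:ZMod 2)+1).val = 0 from rfl, show (1:ZMod 2).val = 1 from rfl,
      show ((0:ZMod 2)).val = 0 from rfl, show ((0:ZMod 2)+1).val = 1 from rfl,
      show ((1:ZMod 2)+0).val = 1 from rfl]

lemma sgn_zero {R : Type} [Ring R] : (sgn 0 : R) = 1 := by simp [sgn]

lemma sgn_comm {R : Type} [Ring R] (a : ZMod 2) (x : R) : sgn a * x = x * sgn a := by
  rcases zmod2_cases a with h | h <;> subst h <;>
    simp [sgn, show (1:ZMod 2).val = 1 from rfl, show ((0:ZMod 2)).val = 0 from rfl]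

lemma sgn_mul_self {R : Type} [Ring R] (a : ZMod 2) : (sgn a : R) * sgn a = 1 := by
  rw [← sgn_add]
  have : a + a = 0 := by revert a; decide
  rw [this, sgn_zero]

lemma ip_add_left {n : ℕ} (a b c : Deg n) : ip (a + b) c = ip a c + ip b c := by
  simp [ip, add_mul, Finset.sum_add_distrib]

lemma ip_add_right {n : ℕ} (a b c : Deg n) : ip a (b + c) = ip a b + ip a c := by
  simp [ip, mul_add, Finset.sum_add_distrib]

lemma ip_comm {n : ℕ} (a b : Deg n) : ip a b = ip b a := by
  simp [ip, mul_comm]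

lemma ip_zero_right {n : ℕ} (a : Deg n) : ip a 0 = 0 := by simp [ip]

lemma deg_self_add {n : ℕ} (a : Deg n) : a + a = 0 := by
  funext i; exact CharTwo.add_self_eq_zero _

/-- Symmetry of the inverse metric: for a homogeneous nondegenerate graded-symmetric
metric `g_{IJ}` with inverse `g^{IJ}` over a `ℤ₂ⁿ`-commutative algebra,
`g^{JK} = (-1)^{⟨J,J⟩+⟨K,K⟩+⟨K,J⟩+⟨g,g⟩} g^{KJ}`.  In particular the inverse metric
is graded-symmetric when `⟨deg g, deg g⟩ = 0` and graded-skew-symmetric when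
`⟨deg g, deg g⟩ = 1`. -/
theorem inverse_metric_symmetry (n : ℕ) (ι : Type) [Fintype ι] [DecidableEq ι]
    (R : Type) [Ring R]
    (𝒜 : Deg n → AddSubgroup R)           -- grading of the algebra
    (hcomm : ∀ (a b : Deg n) (x y : R), x ∈ 𝒜 a → y ∈ 𝒜 b →
      x * y = sgn (ip a b) * (y * x))      -- ℤ₂ⁿ-commutativity
    (deg : ι → Deg n)                      -- degrees of the indices
    (g gl : ι → ι → R) (dg : Deg n)        -- metric, inverse metric, deg(g)
    (hdeg : ∀ I J, g I J ∈ 𝒜 (deg I + deg J + dg))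
    (hdegInv : ∀ I J, gl I J ∈ 𝒜 (deg I + deg J + dg))
    (hsym : ∀ I J, g I J = sgn (ip (deg I) (deg J)) * g J I)
    (hinv₁ : ∀ I J, ∑ K, gl I K * g K J = if I = J then 1 else 0)
    (hinv₂ : ∀ I J, ∑ K, g I K * gl K J = if I = J then 1 else 0) :
    ∀ J K, gl J K =
      sgn (ip (deg J) (deg J) + ip (deg K) (deg K) + ip (deg K) (deg J)
        + ip dg dg) * gl K J := by
  classical
  -- The sign-twisted transpose of `gl` is a right inverse of `g`.
  have hR : ∀ I J : ι, (∑ K, g I K *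
      (sgn (ip (deg K) (deg K) + ip (deg J) (deg J) + ip (deg J) (deg K) + ip dg dg)
        * gl J K)) = if I = J then 1 else 0 := by
    intro I J
    have hterm : ∀ K : ι, g I K *
        (sgn (ip (deg K) (deg K) + ip (deg J) (deg J) + ip (deg J) (deg K) + ip dg dg)
          * gl J K)
        = sgn (ip (deg J + dg) (deg I + deg J)) * (gl J K * g K I) := by
      intro K
      have h1 : gl J K * g K I =
          sgn (ip (deg J + deg K + dg) (deg K + deg I + dg) + ip (deg K) (deg I)) *
            (g I K * gl J K) := by
        rw [hcomm _ _ _ _ (hdegInv J K) (hdeg K I), hsym K I, sgn_add]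
        rw [mul_assoc, mul_assoc]
      have h2 : g I K * gl J K =
          sgn (ip (deg J + deg K + dg) (deg K + deg I + dg) + ip (deg K) (deg I)) *
            (gl J K * g K I) := by
        rw [h1, ← mul_assoc, sgn_mul_self, one_mul]
      have hZ : (ip (deg K) (deg K) + ip (deg J) (deg J) + ip (deg J) (deg K) + ip dg dg)
          + (ip (deg J + deg K + dg) (deg K + deg I + dg) + ip (deg K) (deg I))
          = ip (deg J + dg) (deg I + deg J) := by
        simp only [ip_add_left, ip_add_right]
        rw [ip_comm dg (deg K), ip_comm dg (deg J)]
        generalize ip (deg K) (deg K) = a1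
        generalize ip (deg J) (deg J) = a2
        generalize ip (deg J) (deg K) = a3
        generalize ip dg dg = a4
        generalize ip (deg J) (deg I) = a5
        generalize ip (deg J) dg = a6
        generalize ip (deg K) (deg I) = a7
        generalize ip (deg K) dg = a8
        generalize ip dg (deg I) = a9
        revert a1 a2 a3 a4 a5 a6 a7 a8 a9
        decide
      rw [← mul_assoc, ← sgn_comm, mul_assoc, h2, ← mul_assoc, ← sgn_add, hZ]
    rw [Finset.sum_congr rfl (fun K _ => hterm K), ← Finset.mul_sum, hinv₁]
    by_cases h : I = J
    · subst h
      rw [deg_self_add, ip_zero_right, sgn_zero, if_pos rfl, one_mul]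
    · rw [if_neg h, if_neg (fun hh => h hh.symm), mul_zero]
  intro J K
  -- Uniqueness of inverse: contract gl with (g · twisted-transpose) in two ways.
  have e1 : ∑ M, gl J M * (∑ L, g M L *
      (sgn (ip (deg L) (deg L) + ip (deg K) (deg K) + ip (deg K) (deg L) + ip dg dg)
        * gl K L)) = gl J K := by
    simp only [hR]
    simp [Finset.mul_sum, mul_ite, Finset.sum_ite_eq]
  have e2 : ∑ M, gl J M * (∑ L, g M L *
      (sgn (ip (deg L) (deg L) + ip (deg K) (deg K) + ip (deg K) (deg L) + ip dg dg)
        * gl K L)) =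
      sgn (ip (deg J) (deg J) + ip (deg K) (deg K) + ip (deg K) (deg J) + ip dg dg)
        * gl K J := by
    simp only [Finset.mul_sum]
    rw [Finset.sum_comm]
    have hre : ∀ L, (∑ M, gl J M * (g M L *
        (sgn (ip (deg L) (deg L) + ip (deg K) (deg K) + ip (deg K) (deg L) + ip dg dg)
          * gl K L))) = (∑ M, gl J M * g M L) *
        (sgn (ip (deg L) (deg L) + ip (deg K) (deg K) + ip (deg K) (deg L) + ip dg dg)
          * gl K L) := by
      intro L
      rw [Finset.sum_mul]
      exact Finset.sum_congr rfl fun M _ => (mul_assoc _ _ _).symm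
    rw [Finset.sum_congr rfl (fun L _ => hre L)]
    simp only [hinv₁]
    simp [ite_mul, Finset.sum_ite_eq]
  rw [← e1, e2]
end

section
/- Let g be an odd nondegenerate metric (⟨deg g, deg g⟩ = 1) with inverse g^{IJ}, and let ω_{JI} be a graded-symmetric rank-two covariant tensor, i.e., ω_{JI} = (-1)^⟨deg I, deg J⟩ ω_{IJ}. Then the metric trace tr_g(ω) := (-1)^{⟨deg ω + deg g, deg I + deg J⟩ + ⟨deg I, deg J⟩ + ⟨deg J, deg J⟩} ω_{JI} g^{IJ} (summed over I, J) vanishes. Dually, if g is even and ω is graded-skew-symmetric, then tr_g(ω) = 0. -/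
/-- The metric trace of a rank-two covariant tensor `ω` with respect to the inverse
metric `gl = g^{IJ}`:  `tr_g(ω) = (-1)^{⟨deg ω + deg g, I+J⟩+⟨I,J⟩+⟨J,J⟩} ω_{JI} g^{IJ}`. -/
def metricTrace {n : ℕ} {ι : Type} [Fintype ι] {R : Type} [Ring R]
    (deg : ι → Deg n) (dω dg : Deg n) (ω gl : ι → ι → R) : R :=
  ∑ I, ∑ J, sgn (ip (dω + dg) (deg I + deg J) + ip (deg I) (deg J)
    + ip (deg J) (deg J)) * (ω J I * gl I J)

lemma sgn_one {R : Type} [Ring R] : (sgn 1 : R) = -1 := by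
  simp [sgn, show ((1 : ZMod 2)).val = 1 from rfl]

lemma sgn_mul_sgn_mul {R : Type} [Ring R] (a b : ZMod 2) (x y : R) :
    (sgn a * x) * (sgn b * y) = sgn (a + b) * (x * y) := by
  simp only [sgn, ZMod.val_add]; fin_cases a <;> fin_cases b <;>
    simp [sgn, ZMod.val, show ((1 : ZMod 2)).val = 1 from rfl, show ((1 + 1 : ZMod 2)).val = 0 from rfl,
      mul_assoc, neg_mul, mul_neg]

/-- If the metric is odd (`⟨deg g, deg g⟩ = 1`) and `ω` is graded-symmetric, then
`tr_g(ω) = 0`; dually, if the metric is even (`⟨deg g, deg g⟩ = 0`) and `ω` is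
graded-skew-symmetric then `tr_g(ω) = 0`. -/
theorem metric_trace_vanishes (n : ℕ) (ι : Type) [Fintype ι] (R : Type) [Ring R]
    [Invertible (2 : R)]
    (𝒜 : Deg n → AddSubgroup R)
    (hcomm : ∀ (a b : Deg n) (x y : R), x ∈ 𝒜 a → y ∈ 𝒜 b →
      x * y = sgn (ip a b) * (y * x))
    (deg : ι → Deg n) (dω dg : Deg n)
    (ω gl : ι → ι → R)
    (hdegω : ∀ I J, ω I J ∈ 𝒜 (deg I + deg J + dω))
    (hdeggl : ∀ I J, gl I J ∈ 𝒜 (deg I + deg J + dg))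
    (hglsym : ∀ J K, gl J K =
      sgn (ip (deg J) (deg J) + ip (deg K) (deg K) + ip (deg K) (deg J)
        + ip dg dg) * gl K J)
    (hcase :
      (ip dg dg = 1 ∧ ∀ I J, ω J I = sgn (ip (deg I) (deg J)) * ω I J) ∨
      (ip dg dg = 0 ∧ ∀ I J, ω J I = -(sgn (ip (deg I) (deg J)) * ω I J))) :
    metricTrace deg dω dg ω gl = 0 := by
  set S := metricTrace deg dω dg ω gl with hS
  have key : S = -S := by
    conv_lhs => rw [hS, metricTrace, Finset.sum_comm]
    conv_rhs => rw [hS, metricTrace]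
    rw [← Finset.sum_neg_distrib]
    refine Finset.sum_congr rfl fun I _ => ?_
    rw [← Finset.sum_neg_distrib]
    refine Finset.sum_congr rfl fun J _ => ?_
    -- pointwise identity
    rcases hcase with ⟨hg, hω⟩ | ⟨hg, hω⟩
    · rw [hω J I, hglsym J I, sgn_mul_sgn_mul, ← mul_assoc, ← sgn_add]
      have hz : ip (dω + dg) (deg J + deg I) + ip (deg J) (deg I) + ip (deg I) (deg I)
          + (ip (deg J) (deg I) + (ip (deg J) (deg J) + ip (deg I) (deg I)
            + ip (deg I) (deg J) + ip dg dg))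
          = (ip (dω + dg) (deg I + deg J) + ip (deg I) (deg J) + ip (deg J) (deg J)) + 1 := by
        rw [hg, add_comm (deg J) (deg I), ip_comm (deg J) (deg I)]
        generalize ip (dω + dg) (deg I + deg J) = p
        generalize ip (deg I) (deg J) = q
        generalize ip (deg I) (deg I) = r
        generalize ip (deg J) (deg J) = s
        revert p q r s
        decide
      rw [hz, sgn_add, sgn_one, mul_neg_one, neg_mul]
    · rw [hω J I, hglsym J I, neg_mul, sgn_mul_sgn_mul, mul_neg, ← mul_assoc, ← sgn_add]
      have hz : ip (dω + dg) (deg J + deg I) + ip (deg J) (deg I) + ip (deg I) (deg I)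
          + (ip (deg J) (deg I) + (ip (deg J) (deg J) + ip (deg I) (deg I)
            + ip (deg I) (deg J) + ip dg dg))
          = ip (dω + dg) (deg I + deg J) + ip (deg I) (deg J) + ip (deg J) (deg J) := by
        rw [hg, add_comm (deg J) (deg I), ip_comm (deg J) (deg I)]
        generalize ip (dω + dg) (deg I + deg J) = p
        generalize ip (deg I) (deg J) = q
        generalize ip (deg I) (deg I) = r
        generalize ip (deg J) (deg J) = s
        revert p q r s
        decide
      rw [hz]
  have h2 : (2 : R) * S = 0 := by
    rw [two_mul]
    nth_rewrite 1 [key]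
    exact neg_add_cancel S
  calc S = ⅟(2 : R) * ((2 : R) * S) := by rw [← mul_assoc, invOf_mul_self, one_mul]
    _ = 0 := by rw [h2, mul_zero]
end

section
/- Second Bianchi identity, graded version: for the Levi-Civita connection ∇ on a ℤ₂ⁿ-manifold, (-1)^⟨deg Y, deg Z⟩ (∇_Z R_∇)(X,Y) + (-1)^⟨deg X, deg Y⟩ (∇_Y R_∇)(Z,X) + (-1)^⟨deg Z, deg X⟩ (∇_X R_∇)(Y,Z) = 0, where (∇_Z R_∇)(X,Y)W = ∇_Z(R_∇(X,Y)W) − R_∇(∇_Z X, Y)W − (-1)^⟨deg Z, deg X⟩ R_∇(X, ∇_Z Y)W − (-1)^⟨deg Z, deg X + deg Y⟩ R_∇(X,Y)∇_Z W. -/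
/-- A homogeneous vector field of degree `γ`: an additive graded derivation. -/
def IsVF {n : ℕ} {A : Type} [Ring A] (𝒜 : Deg n → AddSubgroup A)
    (γ : Deg n) (X : A → A) : Prop :=
  (∀ a b, X (a + b) = X a + X b) ∧
  (∀ (δ : Deg n) (a : A), a ∈ 𝒜 δ → X a ∈ 𝒜 (γ + δ)) ∧
  (∀ (δ ε : Deg n) (a b : A), a ∈ 𝒜 δ → b ∈ 𝒜 ε →
    X (a * b) = X a * b + sgn (ip γ δ) * (a * X b))

/-- The graded commutator bracket of homogeneous vector fields. -/
def br {n : ℕ} {A : Type} [Ring A] (γ δ : Deg n) (X Y : A → A) : A → A :=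
  fun a => X (Y a) - sgn (ip γ δ) * (Y (X a))

/-- Multiplication of a vector field by a function. -/
def smulV {A : Type} [Mul A] (f : A) (X : A → A) : A → A := fun a => f * X a

/-- The Riemann curvature of an affine connection. -/
def curv {n : ℕ} {A : Type} [Ring A]
    (nab : (A → A) → (A → A) → (A → A)) (γ δ : Deg n) (X Y Z : A → A) : A → A :=
  fun a => nab X (nab Y Z) a - sgn (ip γ δ) * nab Y (nab X Z) a
    - nab (br γ δ X Y) Z a

/-- The covariant derivative `(∇_Z R)(X,Y)W` of the curvature tensor, defined by
the graded product rule, where `Z, X, Y, W` have degrees `ζ, γ, δ, η`. -/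
def covCurv {n : ℕ} {A : Type} [Ring A]
    (nab : (A → A) → (A → A) → (A → A)) (ζ γ δ : Deg n)
    (Z X Y W : A → A) : A → A :=
  fun a => nab Z (curv nab γ δ X Y W) a
    - curv nab (ζ + γ) δ (nab Z X) Y W a
    - sgn (ip ζ γ) * curv nab γ (ζ + δ) X (nab Z Y) W a
    - sgn (ip ζ (γ + δ)) * curv nab γ δ X Y (nab Z W) a

/-- Graded second Bianchi identity for the Levi-Civita connection:
`(-1)^⟨Y,Z⟩ (∇_Z R)(X,Y) + (-1)^⟨X,Y⟩ (∇_Y R)(Z,X) + (-1)^⟨Z,X⟩ (∇_X R)(Y,Z) = 0`. -/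
theorem graded_second_bianchi (n : ℕ) (A : Type) [Ring A]
    (𝒜 : Deg n → AddSubgroup A)
    (nab : (A → A) → (A → A) → (A → A))
    (haddl : ∀ X Y Z : A → A, nab (fun a => X a + Y a) Z
      = fun a => nab X Z a + nab Y Z a)
    (haddr : ∀ X Y Z : A → A, nab X (fun a => Y a + Z a)
      = fun a => nab X Y a + nab X Z a)
    (hlin : ∀ (f : A) (X Y : A → A), nab (smulV f X) Y = smulV f (nab X Y))
    (hleib : ∀ (γ ε : Deg n) (X Y : A → A) (f : A),
      IsVF 𝒜 γ X → f ∈ 𝒜 ε →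
      nab X (smulV f Y) = fun a => X f * Y a + sgn (ip γ ε) * (f * nab X Y a))
    (hdeg : ∀ (γ δ : Deg n) (X Y : A → A),
      IsVF 𝒜 γ X → IsVF 𝒜 δ Y → IsVF 𝒜 (γ + δ) (nab X Y))
    (htf : ∀ (γ δ : Deg n) (X Y : A → A), IsVF 𝒜 γ X → IsVF 𝒜 δ Y →
      (fun a => nab X Y a - sgn (ip γ δ) * nab Y X a) = br γ δ X Y)
    (hjacobi : ∀ (γ δ ε : Deg n) (X Y Z : A → A),
      IsVF 𝒜 γ X → IsVF 𝒜 δ Y → IsVF 𝒜 ε Z →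
      br γ (δ + ε) X (br δ ε Y Z)
        = fun a => br (γ + δ) ε (br γ δ X Y) Z a
          + sgn (ip γ δ) * br δ (γ + ε) Y (br γ ε X Z) a) :
    ∀ (γ δ ε η : Deg n) (X Y Z W : A → A),
      IsVF 𝒜 γ X → IsVF 𝒜 δ Y → IsVF 𝒜 ε Z → IsVF 𝒜 η W →
      ∀ a : A,
        sgn (ip δ ε) * covCurv nab ε γ δ Z X Y W a
          + sgn (ip γ δ) * covCurv nab δ ε γ Y Z X W a
          + sgn (ip ε γ) * covCurv nab γ δ ε X Y Z W a = 0 := by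
  intro γ δ ε η X Y Z W hX hY hZ hW a
  -- ZMod 2 case analysis helper
  have zmod2_cases : ∀ x : ZMod 2, x = 0 ∨ x = 1 := by decide
  have sgn_zero : (sgn 0 : A) = 1 := by
    simp [sgn, show ((0 : ZMod 2).val = 0) from rfl]
  have sgn_one : (sgn 1 : A) = -1 := by
    simp [sgn, show ((1 : ZMod 2).val = 1) from rfl]
  have ip_comm : ∀ (u v : Deg n), ip u v = ip v u := fun u v =>
    Finset.sum_congr rfl fun i _ => mul_comm _ _
  have ip_add_left : ∀ (u v w : Deg n), ip (u + v) w = ip u w + ip v w := by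
    intro u v w; simp [ip, add_mul, Finset.sum_add_distrib]
  have ip_add_right : ∀ (u v w : Deg n), ip u (v + w) = ip u v + ip u w := by
    intro u v w; simp [ip, mul_add, Finset.sum_add_distrib]
  have sgn_add : ∀ x y : ZMod 2, (sgn (x + y) : A) = sgn x * sgn y := by
    intro x y
    rcases zmod2_cases x with hx | hx <;> rcases zmod2_cases y with hy | hy <;>
      subst hx <;> subst hy <;>
      simp [sgn_zero, sgn_one, show ((1 : ZMod 2) + 1 = 0) from by decide]
  have hc1 : ip δ γ = ip γ δ := ip_comm δ γ
  have hc2 : ip ε δ = ip δ ε := ip_comm ε δ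
  have hc3 : ip γ ε = ip ε γ := ip_comm γ ε
  -- vector field lemmas
  have vfz : ∀ (μ : Deg n) (F : A → A), IsVF 𝒜 μ F → F 0 = 0 := by
    intro μ F h
    have h2 := h.1 0 0
    rw [add_zero] at h2
    exact left_eq_add.mp h2
  have vfsub : ∀ (μ : Deg n) (F : A → A), IsVF 𝒜 μ F →
      ∀ u v : A, F (u - v) = F u - F v := by
    intro μ F h u v
    have h2 := h.1 (u - v) v
    rw [sub_add_cancel] at h2
    exact eq_sub_of_add_eq h2.symm
  have vfneg : ∀ (μ : Deg n) (F : A → A), IsVF 𝒜 μ F →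
      ∀ u : A, F (-u) = -F u := by
    intro μ F h u
    have h2 := vfsub μ F h 0 u
    rwa [zero_sub, vfz μ F h, zero_sub] at h2
  have vfsgn : ∀ (μ : Deg n) (F : A → A), IsVF 𝒜 μ F →
      ∀ (s : ZMod 2) (u : A), F (sgn s * u) = sgn s * F u := by
    intro μ F h s u
    rcases zmod2_cases s with hs | hs <;> subst hs
    · rw [sgn_zero, one_mul, one_mul]
    · rw [sgn_one, neg_one_mul, neg_one_mul, vfneg μ F h]
  -- connection lemmas, second slot
  have nzero2 : ∀ Xf : A → A, nab Xf (fun _ => (0:A)) = fun _ => 0 := by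
    intro Xf
    have h := haddr Xf (fun _ => (0:A)) (fun _ => (0:A))
    simp only [add_zero] at h
    funext b
    exact left_eq_add.mp (congrFun h b)
  have nneg2 : ∀ (Xf F : A → A), nab Xf (fun b => -F b) = fun b => -(nab Xf F b) := by
    intro Xf F
    have h := haddr Xf F (fun b => -F b)
    rw [show (fun a => F a + -F a) = (fun _ : A => (0:A)) from funext fun a => by simp,
      nzero2] at h
    funext b
    have h2 : nab Xf (fun b => -F b) b + nab Xf F b = 0 := by
      rw [add_comm]; exact congrFun h.symm b
    exact eq_neg_of_add_eq_zero_left h2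
  have nsub2 : ∀ (Xf F G : A → A),
      nab Xf (fun b => F b - G b) = fun b => nab Xf F b - nab Xf G b := by
    intro Xf F G
    calc nab Xf (fun b => F b - G b) = nab Xf (fun b => F b + -G b) := by
          simp only [sub_eq_add_neg]
      _ = fun b => nab Xf F b + nab Xf (fun b => -G b) b := haddr Xf F (fun b => -G b)
      _ = fun b => nab Xf F b - nab Xf G b := by
          simp only [nneg2]
          funext b
          exact (sub_eq_add_neg _ _).symm
  have nsgn2 : ∀ (Xf : A → A) (s : ZMod 2) (F : A → A),
      nab Xf (fun b => sgn s * F b) = fun b => sgn s * nab Xf F b := by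
    intro Xf s F
    rcases zmod2_cases s with hs | hs <;> subst hs
    · funext b; simp [sgn_zero]
    · simp only [sgn_one, neg_one_mul]
      exact nneg2 Xf F
  -- connection lemmas, first slot
  have nzero1 : ∀ G : A → A, nab (fun _ => (0:A)) G = fun _ => 0 := by
    intro G
    have h := hlin 0 (fun _ => (0:A)) G
    have e1 : smulV (0:A) (fun _ => (0:A)) = (fun _ : A => (0:A)) :=
      funext fun b => zero_mul _
    have e2 : smulV (0:A) (nab (fun _ => (0:A)) G) = (fun _ : A => (0:A)) :=
      funext fun b => zero_mul _
    rw [e1, e2] at h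
    exact h
  have nsgn1 : ∀ (f : A) (F G : A → A),
      nab (fun b => f * F b) G = fun b => f * nab F G b := by
    intro f F G
    exact hlin f F G
  have nsub1 : ∀ (F G H : A → A),
      nab (fun b => F b - G b) H = fun b => nab F H b - nab G H b := by
    intro F G H
    have hng : nab (fun b => -G b) H = fun b => -(nab G H b) := by
      have h := hlin (-1) G H
      have e1 : smulV (-1:A) G = (fun b => -G b) := funext fun b => neg_one_mul _
      have e2 : smulV (-1:A) (nab G H) = (fun b => -(nab G H b)) :=
        funext fun b => neg_one_mul _
      rw [e1, e2] at h
      exact h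
    calc nab (fun b => F b - G b) H = nab (fun b => F b + -G b) H := by
          simp only [sub_eq_add_neg]
      _ = fun b => nab F H b + nab (fun b => -G b) H b := haddl F (fun b => -G b) H
      _ = fun b => nab F H b - nab G H b := by
          simp only [hng]
          funext b
          exact (sub_eq_add_neg _ _).symm
  -- expanding nab over a bracket in the first slot
  have nbr1 : ∀ (α β : Deg n) (P Q : A → A), IsVF 𝒜 α P → IsVF 𝒜 β Q → ∀ R : A → A,
      nab (br α β P Q) R
        = fun b => nab (nab P Q) R b - sgn (ip α β) * nab (nab Q P) R b := by
    intro α β P Q hP hQ R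
    rw [← htf α β P Q hP hQ]
    simp only [nsub1, nsgn1]
  -- pointwise torsion-freeness
  have tfpt : ∀ (α β : Deg n) (P Q : A → A), IsVF 𝒜 α P → IsVF 𝒜 β Q → ∀ t : A,
      nab P Q t = br α β P Q t + sgn (ip α β) * nab Q P t := by
    intro α β P Q hP hQ t
    exact eq_add_of_sub_eq (congrFun (htf α β P Q hP hQ) t)
  -- the bracket-residual function vanishes
  have hG : (fun b =>
        sgn (ip δ ε) * br (ε + γ) δ (nab Z X) Y b
      + sgn (ip δ ε) * (sgn (ip ε γ) * br γ (ε + δ) X (nab Z Y) b)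
      + sgn (ip γ δ) * br (δ + ε) γ (nab Y Z) X b
      + sgn (ip γ δ) * (sgn (ip δ ε) * br ε (δ + γ) Z (nab Y X) b)
      + sgn (ip ε γ) * br (γ + δ) ε (nab X Y) Z b
      + sgn (ip ε γ) * (sgn (ip γ δ) * br δ (γ + ε) Y (nab X Z) b))
      = fun _ => (0:A) := by
    funext b
    simp only [br]
    simp only [tfpt ε γ Z X hZ hX, tfpt ε δ Z Y hZ hY, tfpt δ γ Y X hY hX]
    simp only [br, hX.1, hY.1, hZ.1, vfsub γ X hX, vfsub δ Y hY, vfsub ε Z hZ,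
      vfsgn γ X hX, vfsgn δ Y hY, vfsgn ε Z hZ]
    simp only [ip_add_left, ip_add_right, sgn_add, hc1, hc2, hc3]
    rcases zmod2_cases (ip γ δ) with h1 | h1 <;>
      rcases zmod2_cases (ip δ ε) with h2 | h2 <;>
      rcases zmod2_cases (ip ε γ) with h3 | h3 <;>
      simp only [h1, h2, h3, sgn_zero, sgn_one, one_mul, mul_one, neg_one_mul,
        mul_neg, neg_neg, neg_mul] <;>
      abel
  have h0 : nab (fun b =>
        sgn (ip δ ε) * br (ε + γ) δ (nab Z X) Y b
      + sgn (ip δ ε) * (sgn (ip ε γ) * br γ (ε + δ) X (nab Z Y) b)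
      + sgn (ip γ δ) * br (δ + ε) γ (nab Y Z) X b
      + sgn (ip γ δ) * (sgn (ip δ ε) * br ε (δ + γ) Z (nab Y X) b)
      + sgn (ip ε γ) * br (γ + δ) ε (nab X Y) Z b
      + sgn (ip ε γ) * (sgn (ip γ δ) * br δ (γ + ε) Y (nab X Z) b)) W a = 0 := by
    rw [hG, nzero1]
  -- main computation
  have curvdef : ∀ (α β : Deg n) (P Q R : A → A), curv nab α β P Q R
      = fun b => nab P (nab Q R) b - sgn (ip α β) * nab Q (nab P R) b
        - nab (br α β P Q) R b := fun _ _ _ _ _ => rfl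
  simp only [covCurv]
  simp only [curvdef]
  simp only [nbr1 γ δ X Y hX hY, nbr1 ε γ Z X hZ hX, nbr1 δ ε Y Z hY hZ]
  simp only [nsub2, nsgn2]
  simp only [ip_add_left, ip_add_right, sgn_add, hc1, hc2, hc3]
  rw [← h0]
  simp only [haddl, nsgn1]
  rcases zmod2_cases (ip γ δ) with h1 | h1 <;>
    rcases zmod2_cases (ip δ ε) with h2 | h2 <;>
    rcases zmod2_cases (ip ε γ) with h3 | h3 <;>
    simp only [h1, h2, h3, sgn_zero, sgn_one, one_mul, mul_one, neg_one_mul,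
      mul_neg, neg_neg, neg_mul] <;>
    abel
end

section
/- On a ℤ₂ⁿ-graded coordinate domain with homogeneous metric g of nonzero ℤ₂ⁿ-degree, a homogeneous function f of degree deg(g) that is constant (all partial derivatives, including with respect to formal coordinates, vanish) must be zero. Consequently the Ricci scalar, having degree deg(g) ≠ 0, cannot be a nonzero constant. -/
/-- The algebraic core of the "no nonzero constant Ricci scalar in nonzero degree"
statement: in a graded formal power series ring (over a field of characteristic
zero), a homogeneous element of nonzero `ℤ₂ⁿ`-degree all of whose formal partial
derivatives vanish must be zero.  Consequently the Ricci scalar, having degree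
`deg g ≠ 0`, cannot be a nonzero constant. -/
theorem homogeneous_constant_of_nonzero_degree_is_zero
    (n : ℕ) (σ : Type) (degv : σ → Deg n)   -- degrees of the formal variables
    (γ : Deg n) (hγ : γ ≠ 0)
    (f : MvPowerSeries σ ℝ)
    -- `f` is homogeneous of degree `γ`:
    (hhom : ∀ d : σ →₀ ℕ, MvPowerSeries.coeff d f ≠ 0 →
      (d.sum fun i k => k • degv i) = γ)
    -- all formal partial derivatives of `f` vanish:
    (hder : ∀ (i : σ) (d : σ →₀ ℕ),
      ((d i + 1 : ℕ) : ℝ) * MvPowerSeries.coeff (d + Finsupp.single i 1) f = 0) :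
    f = 0 := by
  ext d
  rw [map_zero]
  by_cases hd : d = 0
  · subst hd
    by_contra h
    have := hhom 0 h
    simp [Finsupp.sum_zero_index] at this
    exact hγ this.symm
  · obtain ⟨i, hi⟩ : ∃ i, d i ≠ 0 := by
      by_contra h
      push_neg at h
      exact hd (Finsupp.ext h)
    set d' := d - Finsupp.single i 1 with hd'
    have hdd : d' + Finsupp.single i 1 = d := by
      ext j
      rcases eq_or_ne j i with rfl | hj
      · simp [hd', Nat.sub_add_cancel (Nat.one_le_iff_ne_zero.2 hi)]
      · simp [hd', Finsupp.single_eq_of_ne hj]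
    have := hder i d'
    rw [hdd] at this
    have hne : ((d' i + 1 : ℕ) : ℝ) ≠ 0 := by positivity
    exact (mul_eq_zero.1 this).resolve_left hne
end
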